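/- Main lower bound: if there exists a deterministic algorithm achieving simple regret r_(T) ≤ ε on every f in the RKHS ball S of radius R within T noiseless function evaluations, then T > log N(S(X), 4ε, ‖·‖_∞) / (4 log(R/ε)), provided 0 < ε < ε₀, where ε₀ = min{ sup{δ > 0 : log N(S(X), 4δ, ‖·‖_∞) > 2 log 2}, R/4 }. -/

import Mathlib

open scoped RealInnerProductSpace ENNReal

/-- Sup-norm covering number over `X` of a family `F` of real-valued functions. -/
noncomputable def covN {D : Type*} (X : Set D) (F : Set (D → ℝ)) (ε : ℝ) : ℝ≥0∞ :=
  ⨅ (C : Finset (D → ℝ)) (_ : ∀ f ∈ F, ∃ c ∈ C, ∀ x ∈ X, |f x - c x| ≤ ε),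
    (C.card : ℝ≥0∞)

/-- History produced by running a deterministic algorithm on the objective `F`. -/
def runHist {D : Type*} (alg : List (D × ℝ) → D) (F : D → ℝ) : ℕ → List (D × ℝ)
  | 0 => []
  | n + 1 => runHist alg F n ++ [(alg (runHist alg F n), F (alg (runHist alg F n)))]

/-- The point queried at step `n` (0-indexed) by the algorithm on objective `F`. -/
def queryPt {D : Type*} (alg : List (D × ℝ) → D) (F : D → ℝ) (n : ℕ) : D :=
  alg (runHist alg F n)

/-! Run the algorithm on the zero function and let `V` be the span of the kernel sections at its
`T` query points. An `f` in the ball orthogonal to `V` vanishes at all of them, so the algorithm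
queries the same points on `f` and on `-f` as on `0`, and the regret guarantee for both forces
`|f| ≤ ε` on `X`. Hence every function of the ball is `ε`-close to the evaluation of its
projection onto `V`, a ball of dimension at most `T`, which a volume argument covers by
`(1 + R/ε)^T` balls of radius `2ε`: `N(S(X), 4ε) ≤ (1 + R/ε)^T ≤ (R/ε)^(2T)`. -/

open Metric MeasureTheory Module

section Packing

variable {E : Type*} [NormedAddCommGroup E] [NormedSpace ℝ E] [FiniteDimensional ℝ E]

theorem Finset.card_le_one_add_div_pow_of_pairwise_lt_dist {s : Finset E} {R δ : ℝ}
    (hR : 0 ≤ R) (hδ : 0 < δ) (hs : (s : Set E) ⊆ closedBall 0 R)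
    (hsep : (s : Set E).Pairwise fun x y => 2 * δ < dist x y) :
    (s.card : ℝ) ≤ (1 + R / δ) ^ finrank ℝ E := by
  let : MeasurableSpace E := borel E
  have : BorelSpace E := ⟨rfl⟩
  set μ : Measure E := Measure.addHaar
  set B := μ (ball 0 1)
  have hball : ∀ x : E, ∀ r : ℝ, 0 < r → μ (ball x r) = ENNReal.ofReal (r ^ finrank ℝ E) * B :=
    fun x r hr => Measure.addHaar_ball_of_pos μ x hr
  have hdisj : (s : Set E).PairwiseDisjoint fun x => ball x δ := fun x hx y hy hxy =>
    ball_disjoint_ball (by linarith [hsep hx hy hxy])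
  have hsub : (⋃ x ∈ s, ball x δ) ⊆ ball 0 (R + δ) := by
    refine Set.iUnion₂_subset fun x hx => ball_subset_ball' ?_
    linarith [mem_closedBall.mp (hs hx)]
  have hvol : (s.card : ENNReal) * ENNReal.ofReal (δ ^ finrank ℝ E) * B
      ≤ ENNReal.ofReal ((R + δ) ^ finrank ℝ E) * B := calc
    _ = μ (⋃ x ∈ s, ball x δ) := by
      rw [measure_biUnion_finset hdisj fun x _ => measurableSet_ball,
        Finset.sum_congr rfl fun x _ => hball x δ hδ, Finset.sum_const, nsmul_eq_mul, mul_assoc]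
    _ ≤ μ (ball 0 (R + δ)) := measure_mono hsub
    _ = _ := hball 0 _ (by linarith)
  have hcard := (ENNReal.mul_le_mul_iff_left (measure_ball_pos μ 0 one_pos).ne'
    measure_ball_lt_top.ne).mp hvol
  rw [← ENNReal.ofReal_natCast, ← ENNReal.ofReal_mul (by positivity),
    ENNReal.ofReal_le_ofReal_iff (by positivity)] at hcard
  rw [← le_div_iff₀ (by positivity), ← div_pow] at hcard
  rwa [one_add_div hδ.ne', add_comm δ]

theorem exists_finset_card_le_forall_exists_dist_le {R δ : ℝ} (hR : 0 ≤ R) (hδ : 0 < δ) :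
    ∃ s : Finset E, (s.card : ℝ) ≤ (1 + R / δ) ^ finrank ℝ E ∧
      ∀ x ∈ closedBall (0 : E) R, ∃ y ∈ s, dist x y ≤ 2 * δ := by
  classical
  let IsPacking : Finset E → Prop := fun s =>
    (s : Set E) ⊆ closedBall 0 R ∧ (s : Set E).Pairwise fun x y => 2 * δ < dist x y
  let packingCards : Set ℕ := {n | ∃ s, IsPacking s ∧ s.card = n}
  have hbdd : BddAbove packingCards := by
    refine ⟨⌊(1 + R / δ) ^ finrank ℝ E⌋₊, ?_⟩
    rintro _ ⟨s, hs, rfl⟩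
    exact Nat.le_floor (s.card_le_one_add_div_pow_of_pairwise_lt_dist hR hδ hs.1 hs.2)
  have hne : packingCards.Nonempty := ⟨0, ∅, by simp [IsPacking], rfl⟩
  obtain ⟨s, hs, hcard⟩ := Nat.sSup_mem hne hbdd
  refine ⟨s, s.card_le_one_add_div_pow_of_pairwise_lt_dist hR hδ hs.1 hs.2, fun x hx => ?_⟩
  by_contra! hfar
  have hxs : x ∉ s := fun h => by linarith [hfar x h, dist_self x]
  have hins : IsPacking (insert x s) := by
    refine ⟨?_, ?_⟩
    · rw [Finset.coe_insert]
      exact Set.insert_subset hx hs.1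
    · rw [Finset.coe_insert]
      exact hs.2.insert fun y hy _ => ⟨hfar y hy, dist_comm x y ▸ hfar y hy⟩
  have := le_csSup hbdd ⟨_, hins, rfl⟩
  rw [Finset.card_insert_of_notMem hxs, hcard] at this
  omega

end Packing

theorem runHist_congr {D : Type*} (alg : List (D × ℝ) → D) {F G : D → ℝ} {n : ℕ}
    (h : ∀ t < n, F (queryPt alg G t) = G (queryPt alg G t)) :
    runHist alg F n = runHist alg G n := by
  induction n with
  | zero => rfl
  | succ n ih =>
    have hn : runHist alg F n = runHist alg G n := ih fun t ht => h t (by omega)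
    have hq : F (alg (runHist alg G n)) = G (alg (runHist alg G n)) := h n n.lt_succ_self
    simp only [runHist, hn, hq]

theorem covN_toReal_le_card {D : Type*} {X : Set D} {F : Set (D → ℝ)} {ε : ℝ}
    {C : Finset (D → ℝ)} (hC : ∀ f ∈ F, ∃ c ∈ C, ∀ x ∈ X, |f x - c x| ≤ ε) :
    (covN X F ε).toReal ≤ C.card := by
  refine ENNReal.toReal_le_of_le_ofReal (Nat.cast_nonneg _) ?_
  rw [ENNReal.ofReal_natCast]
  exact iInf₂_le C hC

section Kernel

variable {H : Type*} [NormedAddCommGroup H] [InnerProductSpace ℝ H] {D : Type*}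

/-- The set `S(X)` of the paper. -/
def kernelBall (K : D → H) (R : ℝ) : Set (D → ℝ) :=
  (fun f : H => fun p => ⟪f, K p⟫) '' {f : H | ‖f‖ ≤ R}

theorem covN_kernelBall_toReal_le {K : D → H} {X : Set D} (hK : ∀ x ∈ X, ‖K x‖ ≤ 1)
    (V : Submodule ℝ H) [FiniteDimensional ℝ V] {R ε : ℝ} (hR : 0 ≤ R) (hε : 0 < ε)
    (hsmall : ∀ g ∈ Vᗮ, ‖g‖ ≤ R → ∀ x ∈ X, |⟪g, K x⟫| ≤ ε) :
    (covN X (kernelBall K R) (4 * ε)).toReal ≤ (1 + R / ε) ^ finrank ℝ V := by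
  classical
  obtain ⟨net, hcard, hnet⟩ := exists_finset_card_le_forall_exists_dist_le (E := V) hR hε
  let C : Finset (D → ℝ) := net.image fun y : V => fun x => ⟪(y : H), K x⟫
  have hcover : ∀ f ∈ kernelBall K R, ∃ c ∈ C, ∀ x ∈ X, |f x - c x| ≤ 4 * ε := by
    rintro _ ⟨g, hg, rfl⟩
    let p : V := V.orthogonalProjectionOnto g
    let r : H := Vᗮ.starProjection g
    have hg_eq : g = p + r := (V.starProjection_add_starProjection_orthogonal g).symm
    have hrR : ‖r‖ ≤ R := (Vᗮ.norm_starProjection_apply_le g).trans hg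
    obtain ⟨y, hy, hpy⟩ := hnet p
      (mem_closedBall_zero_iff.2 ((V.norm_orthogonalProjectionOnto_apply_le g).trans hg))
    refine ⟨_, Finset.mem_image_of_mem _ hy, fun x hx => ?_⟩
    rw [dist_eq_norm] at hpy
    calc |⟪g, K x⟫ - ⟪(y : H), K x⟫| = |⟪r, K x⟫ + ⟪((p - y : V) : H), K x⟫| := by
          rw [hg_eq, Submodule.coe_sub, inner_add_left, inner_sub_left]; ring_nf
      _ ≤ |⟪r, K x⟫| + |⟪((p - y : V) : H), K x⟫| := abs_add_le _ _
      _ ≤ ε + ‖p - y‖ * ‖K x‖ := add_le_add (hsmall r (Vᗮ.starProjection_apply_mem g) hrR x hx)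
          (abs_real_inner_le_norm _ _)
      _ ≤ ε + 2 * ε * 1 := by gcongr; exact hK x hx
      _ ≤ 4 * ε := by linarith
  calc (covN X (kernelBall K R) (4 * ε)).toReal ≤ C.card := covN_toReal_le_card hcover
    _ ≤ net.card := by exact_mod_cast Finset.card_image_le
    _ ≤ _ := hcard

def AchievesSimpleRegret (alg : List (D × ℝ) → D) (K : D → H) (X : Set D) (R ε : ℝ) (T : ℕ) :
    Prop :=
  ∀ f : H, ‖f‖ ≤ R → ∃ τ < T, ∀ x ∈ X,
    ⟪f, K (queryPt alg (fun p => ⟪f, K p⟫) τ)⟫ ≤ ⟪f, K x⟫ + ε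

namespace AchievesSimpleRegret

variable {alg : List (D × ℝ) → D} {K : D → H} {X : Set D} {R ε : ℝ} {T : ℕ}

theorem neg_le_inner (h : AchievesSimpleRegret alg K X R ε T) {g : H} (hg : ‖g‖ ≤ R)
    (hzero : ∀ t < T, ⟪g, K (queryPt alg (fun _ => 0) t)⟫ = 0) {x : D} (hx : x ∈ X) :
    -ε ≤ ⟪g, K x⟫ := by
  obtain ⟨τ, hτ, hreg⟩ := h g hg
  -- the algorithm only ever sees the value `0`, exactly as when run on the zero function
  have hsame : queryPt alg (fun p => ⟪g, K p⟫) τ = queryPt alg (fun _ => 0) τ :=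
    congrArg alg (runHist_congr alg fun t ht => hzero t (ht.trans hτ))
  have := hreg x hx
  rw [hsame, hzero τ hτ] at this
  linarith

theorem abs_inner_le (h : AchievesSimpleRegret alg K X R ε T) {g : H} (hg : ‖g‖ ≤ R)
    (hzero : ∀ t < T, ⟪g, K (queryPt alg (fun _ => 0) t)⟫ = 0) {x : D} (hx : x ∈ X) :
    |⟪g, K x⟫| ≤ ε := by
  have hneg := h.neg_le_inner (g := -g) (by rwa [norm_neg])
    (fun t ht => by rw [inner_neg_left, hzero t ht, neg_zero]) hx
  rw [inner_neg_left] at hneg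
  exact abs_le.2 ⟨h.neg_le_inner hg hzero hx, by linarith⟩

end AchievesSimpleRegret

end Kernel

theorem log_le_two_mul_mul_log {N u : ℝ} {m : ℕ} (hN : 0 ≤ N) (hu : 2 ≤ u)
    (h : N ≤ (1 + u) ^ m) : Real.log N ≤ 2 * m * Real.log u := by
  rcases hN.eq_or_lt with rfl | hpos
  · rw [Real.log_zero]
    have := Real.log_nonneg (by linarith : 1 ≤ u)
    positivity
  · calc Real.log N ≤ Real.log ((u ^ 2) ^ m) :=
          Real.log_le_log hpos (h.trans (pow_le_pow_left₀ (by positivity) (by nlinarith) m))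
      _ = 2 * m * Real.log u := by rw [← pow_mul, Real.log_pow]; push_cast; ring

theorem main_lower_bound_general {H : Type*} [NormedAddCommGroup H]
    [InnerProductSpace ℝ H] {d : ℕ}
    (K : (Fin d → ℝ) → H) (X : Set (Fin d → ℝ))
    (hkbound : ∀ x₁ ∈ X, ∀ x₂ ∈ X, ⟪K x₁, K x₂⟫ ≤ (1 : ℝ))
    (R : ℝ) (ε : ℝ) (hε : 0 < ε)
    (hε₀ : ε < min
      (sSup {δ : ℝ | 0 < δ ∧
        2 * Real.log 2 < Real.log (covN X
          ((fun f : H => fun p => ⟪f, K p⟫) '' {f : H | ‖f‖ ≤ R}) (4 * δ)).toReal})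
      (R / 4))
    (T : ℕ)
    (alg : List ((Fin d → ℝ) × ℝ) → (Fin d → ℝ))
    (hregret : ∀ f : H, ‖f‖ ≤ R → ∃ τ < T, ∀ x ∈ X,
      ⟪f, K (queryPt alg (fun p => ⟪f, K p⟫) τ)⟫ ≤ ⟪f, K x⟫ + ε) :
    Real.log (covN X ((fun f : H => fun p => ⟪f, K p⟫) '' {f : H | ‖f‖ ≤ R})
        (4 * ε)).toReal / (4 * Real.log (R / ε)) < (T : ℝ) := by
  have hεR : ε < R / 4 := hε₀.trans_le (min_le_right _ _)
  have hR : 0 ≤ R := by linarith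
  have hT : 0 < T := by
    obtain ⟨τ, hτ, -⟩ := hregret 0 (by rwa [norm_zero])
    exact Nat.zero_lt_of_lt hτ
  have hK : ∀ x ∈ X, ‖K x‖ ≤ 1 := fun x hx => by
    simpa [real_inner_self_eq_norm_sq, sq_le_one_iff₀] using hkbound x hx x hx
  let V := Submodule.span ℝ (Set.range fun t : Fin T => K (queryPt alg (fun _ => 0) t))
  have : FiniteDimensional ℝ V := FiniteDimensional.span_of_finite ℝ (Set.finite_range _)
  have hVT : finrank ℝ V ≤ T := (finrank_range_le_card _).trans_eq (Fintype.card_fin T)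
  have hsmall : ∀ g ∈ Vᗮ, ‖g‖ ≤ R → ∀ x ∈ X, |⟪g, K x⟫| ≤ ε := fun g hg hgR x hx =>
    AchievesSimpleRegret.abs_inner_le hregret hgR
      (fun t ht => V.inner_left_of_mem_orthogonal (Submodule.subset_span ⟨⟨t, ht⟩, rfl⟩) hg) hx
  have hu : 0 < Real.log (R / ε) := Real.log_pos (by rw [lt_div_iff₀ hε]; linarith)
  have hlog := log_le_two_mul_mul_log ENNReal.toReal_nonneg
    (by rw [le_div_iff₀ hε]; linarith) (covN_kernelBall_toReal_le hK V hR hε hsmall)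
  have hVT' : (finrank ℝ V : ℝ) ≤ T := by exact_mod_cast hVT
  have hT' : (0 : ℝ) < T := by exact_mod_cast hT
  change Real.log (covN X (kernelBall K R) (4 * ε)).toReal / _ < _
  rw [div_lt_iff₀ (by positivity)]
  nlinarith

/-- Main lower bound: if a deterministic algorithm achieves simple regret `≤ ε` on every
`f` in the RKHS ball `S` of radius `R` within `T` noiseless evaluations, then
`T > log N(S(X), 4ε, ‖·‖_∞) / (4 log(R/ε))`, provided `0 < ε < ε₀` with
`ε₀ = min{ sup{δ > 0 : log N(S(X),4δ) > 2 log 2}, R/4 }`.  Here the RKHS `H` is modeled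
as a real Hilbert space with kernel sections `K`, evaluation `f(x) = ⟪f, K x⟫`, kernel
`k(x₁,x₂) = ⟪K x₁, K x₂⟫` continuous and bounded by `1`, and `X` compact. -/
theorem main_lower_bound {H : Type*} [NormedAddCommGroup H]
    [InnerProductSpace ℝ H] [CompleteSpace H] {d : ℕ}
    (K : (Fin d → ℝ) → H) (X : Set (Fin d → ℝ)) (hX : IsCompact X)
    (hkcont : Continuous fun p : (Fin d → ℝ) × (Fin d → ℝ) => ⟪K p.1, K p.2⟫)
    (hkbound : ∀ x₁ ∈ X, ∀ x₂ ∈ X, ⟪K x₁, K x₂⟫ ≤ (1 : ℝ))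
    (R : ℝ) (hR : 0 < R) (ε : ℝ) (hε : 0 < ε)
    (hε₀ : ε < min
      (sSup {δ : ℝ | 0 < δ ∧
        2 * Real.log 2 < Real.log (covN X
          ((fun f : H => fun p => ⟪f, K p⟫) '' {f : H | ‖f‖ ≤ R}) (4 * δ)).toReal})
      (R / 4))
    (T : ℕ)
    (alg : List ((Fin d → ℝ) × ℝ) → (Fin d → ℝ))
    (halgX : ∀ l, alg l ∈ X)
    (hregret : ∀ f : H, ‖f‖ ≤ R → ∃ τ < T, ∀ x ∈ X,
      ⟪f, K (queryPt alg (fun p => ⟪f, K p⟫) τ)⟫ ≤ ⟪f, K x⟫ + ε) :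
    Real.log (covN X ((fun f : H => fun p => ⟪f, K p⟫) '' {f : H | ‖f‖ ≤ R})
        (4 * ε)).toReal / (4 * Real.log (R / ε)) < (T : ℝ) :=
  main_lower_bound_general K X hkbound R ε hε hε₀ T alg hregret
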